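/- Let (M, m) be a maximally reductive pair and A ⊆ H. Suppose a, m ∈ A ∩ M, σ(m) ∈ A ∖ M, σ(a) ∉ A ∪ M, and |a| − cut(A) > 0. Then (A ∪ M, a) is a reductive pair; in particular |a| − cut(A ∪ M) > 0. -/

import Mathlib

open Finset

/-- `cut d A = ∑_{x ∈ A} ∑_{y ∉ A} d x y`, the total weight of pairs
separated by the partition `{A, H ∖ A}`. -/
def cut {H : Type*} [Fintype H] [DecidableEq H] {Λ : Type*}
    [AddCommGroup Λ] [LinearOrder Λ] [IsOrderedAddMonoid Λ] (d : H → H → Λ) (A : Finset H) : Λ :=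
  ∑ x ∈ A, ∑ y ∈ Aᶜ, d x y

/-- `(X, x)` is a reductive pair if `x ∈ X`, `σ x ∉ X` and `|x| - cut X > 0`,
where `|x| = cut {x}`. -/
def IsReductivePair {H : Type*} [Fintype H] [DecidableEq H] {Λ : Type*}
    [AddCommGroup Λ] [LinearOrder Λ] [IsOrderedAddMonoid Λ] (d : H → H → Λ) (σ : H → H)
    (X : Finset H) (x : H) : Prop :=
  x ∈ X ∧ σ x ∉ X ∧ 0 < cut d {x} - cut d X

/-- `X` is a side of a reductive ideal edge if some `x` with `x` and `σ x` on
opposite sides of the partition `{X, H ∖ X}` satisfies `|x| - cut X > 0`. -/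
def IsSideOfReductiveIdealEdge {H : Type*} [Fintype H] [DecidableEq H] {Λ : Type*}
    [AddCommGroup Λ] [LinearOrder Λ] [IsOrderedAddMonoid Λ] (d : H → H → Λ) (σ : H → H)
    (X : Finset H) : Prop :=
  ∃ x : H, ((x ∈ X ∧ σ x ∉ X) ∨ (x ∉ X ∧ σ x ∈ X)) ∧ 0 < cut d {x} - cut d X

/-- `(M, m)` is maximally reductive: it is a reductive pair whose reduction
`|m| - cut M` is at least that of any reductive pair. -/
def IsMaximallyReductivePair {H : Type*} [Fintype H] [DecidableEq H] {Λ : Type*}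
    [AddCommGroup Λ] [LinearOrder Λ] [IsOrderedAddMonoid Λ] (d : H → H → Λ) (σ : H → H)
    (M : Finset H) (m : H) : Prop :=
  IsReductivePair d σ M m ∧
    ∀ X x, IsReductivePair d σ X x → cut d {x} - cut d X ≤ cut d {m} - cut d M

/-!
Cut is submodular: `cut (A ∪ M) + cut (A ∩ M) ≤ cut A + cut M`. Since `m ∈ A ∩ M` and
`σ m ∉ A ∩ M`, maximality of `(M, m)` forces `cut M ≤ cut (A ∩ M)` (either `(A ∩ M, m)` is itself
reductive, or `cut (A ∩ M) ≥ |m| > cut M`). Submodularity then gives `cut (A ∪ M) ≤ cut A`, so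
passing from `A` to `A ∪ M` keeps the reduction at `a` positive.
-/

section Cut

variable {H : Type*} [Fintype H] [DecidableEq H] {Λ : Type*}
  [AddCommGroup Λ] [LinearOrder Λ] [IsOrderedAddMonoid Λ] (d : H → H → Λ)

theorem cut_eq_sum_ite (A : Finset H) :
    cut d A = ∑ x, ∑ y, if x ∈ A ∧ y ∉ A then d x y else 0 := by
  simp [cut, ite_and, ← mem_compl]

theorem cut_union_add_cut_inter_le (hnonneg : ∀ x y, 0 ≤ d x y) (A M : Finset H) :
    cut d (A ∪ M) + cut d (A ∩ M) ≤ cut d A + cut d M := by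
  simp only [cut_eq_sum_ite, ← sum_add_distrib]
  refine sum_le_sum fun x _ => sum_le_sum fun y _ => ?_
  have := hnonneg x y
  by_cases hxA : x ∈ A <;> by_cases hxM : x ∈ M <;> by_cases hyA : y ∈ A <;>
    by_cases hyM : y ∈ M <;> simp [*]

end Cut

theorem IsMaximallyReductivePair.cut_le {H : Type*} [Fintype H] [DecidableEq H] {Λ : Type*}
    [AddCommGroup Λ] [LinearOrder Λ] [IsOrderedAddMonoid Λ] {d : H → H → Λ} {σ : H → H}
    {M : Finset H} {m : H} (hMm : IsMaximallyReductivePair d σ M m) {X : Finset H}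
    (hmX : m ∈ X) (hσmX : σ m ∉ X) : cut d M ≤ cut d X := by
  by_cases hX : 0 < cut d {m} - cut d X
  · exact (sub_le_sub_iff_left _).mp (hMm.2 X m ⟨hmX, hσmX, hX⟩)
  · have hmM : cut d M < cut d {m} := sub_pos.mp hMm.1.2.2
    exact (hmM.trans_le (sub_nonpos.mp (not_lt.mp hX))).le

theorem key_lemma_case_union_a_general {H : Type*} [Fintype H] [DecidableEq H] {Λ : Type*}
    [AddCommGroup Λ] [LinearOrder Λ] [IsOrderedAddMonoid Λ] (d : H → H → Λ)
    (hnonneg : ∀ x y, 0 ≤ d x y)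
    (σ : H → H)
    (M : Finset H) (m : H) (hMm : IsMaximallyReductivePair d σ M m)
    (A : Finset H) (a : H)
    (haAM : a ∈ A ∩ M) (hmAM : m ∈ A ∩ M)
    (hsm : σ m ∈ A \ M) (hsa : σ a ∉ A ∪ M)
    (ha : 0 < cut d {a} - cut d A) :
    IsReductivePair d σ (A ∪ M) a ∧ 0 < cut d {a} - cut d (A ∪ M) := by
  have hσm : σ m ∉ A ∩ M := fun h => (mem_sdiff.mp hsm).2 (mem_inter.mp h).2
  have hM : cut d M ≤ cut d (A ∩ M) := hMm.cut_le hmAM hσm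
  have hAM : cut d (A ∪ M) ≤ cut d A :=
    le_of_add_le_add_right ((cut_union_add_cut_inter_le d hnonneg A M).trans (by gcongr))
  have hpos : 0 < cut d {a} - cut d (A ∪ M) := ha.trans_le (sub_le_sub_left hAM _)
  exact ⟨⟨mem_union_left _ (mem_inter.mp haAM).1, hsa, hpos⟩, hpos⟩

/-- Case of the Key Lemma: if `a, m ∈ A ∩ M`, `σ m ∈ A ∖ M`, `σ a ∉ A ∪ M` and
`|a| - cut A > 0`, then `(A ∪ M, a)` is a reductive pair;
in particular `|a| - cut (A ∪ M) > 0`. -/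
theorem key_lemma_case_union_a {H : Type*} [Fintype H] [DecidableEq H] {Λ : Type*}
    [AddCommGroup Λ] [LinearOrder Λ] [IsOrderedAddMonoid Λ] (d : H → H → Λ)
    (hsymm : ∀ x y, d x y = d y x) (hnonneg : ∀ x y, 0 ≤ d x y)
    (σ : H → H) (hinv : ∀ x, σ (σ x) = x) (hfix : ∀ x, σ x ≠ x)
    (hσnorm : ∀ x, cut d {σ x} = cut d {x})
    (M : Finset H) (m : H) (hMm : IsMaximallyReductivePair d σ M m)
    (A : Finset H) (a : H)
    (haAM : a ∈ A ∩ M) (hmAM : m ∈ A ∩ M)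
    (hsm : σ m ∈ A \ M) (hsa : σ a ∉ A ∪ M)
    (ha : 0 < cut d {a} - cut d A) :
    IsReductivePair d σ (A ∪ M) a ∧ 0 < cut d {a} - cut d (A ∪ M) :=
  key_lemma_case_union_a_general d hnonneg σ M m hMm A a haAM hmAM hsm hsa ha
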